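/- Let D be the densely defined symmetric operator on the real (or complex) Hilbert space ℓ²(ℕ) whose domain is the subspace of finitely supported sequences and which acts by (D f)(n) = √(n+1)·f(n+1) + √n·f(n−1) (with the convention f(−1) = 0), i.e. the Jacobi matrix with zero diagonal and off-diagonal entries √1, √2, √3, …. Then D is essentially self-adjoint: D is symmetric, closable, and its closure is self-adjoint (equivalently, the adjoint of D coincides with the closure of D). -/

import Mathlib

open scoped ENNReal

noncomputable section

/-- The dense subspace of finitely supported sequences in `ℓ²(ℕ)`. -/
def finitelySupported : Submodule ℝ (lp (fun _ : ℕ => ℝ) 2) where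
  carrier := {f | (Function.support (⇑f)).Finite}
  add_mem' := fun {f g} hf hg => (hf.union hg).subset <| by
    rw [lp.coeFn_add]; exact Function.support_add _ _
  zero_mem' := by
    show (Function.support (⇑(0 : lp (fun _ : ℕ => ℝ) 2))).Finite
    rw [lp.coeFn_zero]
    exact Set.finite_empty.subset (by simp [Function.support_zero])
  smul_mem' := fun c f hf => hf.subset fun n hn => by
    simp only [Function.mem_support, lp.coeFn_smul, Pi.smul_apply, smul_eq_mul] at hn ⊢
    exact fun h => hn (by rw [h, mul_zero])

/-- The Jacobi matrix with zero diagonal and off-diagonal entries `√1, √2, √3, …`,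
acting on sequences: `(D f)(n) = √(n+1)·f(n+1) + √n·f(n−1)` (note that at `n = 0`
the coefficient `√0 = 0` implements the convention `f(−1) = 0`). -/
def jacobiSeq (f : ℕ → ℝ) : ℕ → ℝ := fun n =>
  Real.sqrt (n + 1) * f (n + 1) + Real.sqrt n * f (n - 1)

theorem jacobiSeq_support_finite {f : ℕ → ℝ} (hf : (Function.support f).Finite) :
    (Function.support (jacobiSeq f)).Finite := by
  have h1 : Set.Finite ((fun n : ℕ => n + 1) ⁻¹' Function.support f) :=
    hf.preimage (fun a _ b _ h => by omega)
  have h2 : Set.Finite ((fun n : ℕ => n - 1) ⁻¹' Function.support f) := by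
    refine ((hf.image (fun m => m + 1)).union (Set.finite_singleton 0)).subset ?_
    intro n hn
    rcases Nat.eq_zero_or_pos n with h | h
    · exact Or.inr (by simp [h])
    · exact Or.inl ⟨n - 1, hn, by show n - 1 + 1 = n; omega⟩
  refine (h1.union h2).subset fun n hn => ?_
  by_contra hmem
  simp only [Set.mem_union, Set.mem_preimage, Function.mem_support, not_or, not_not] at hmem
  apply hn
  simp only [jacobiSeq, hmem.1, hmem.2, mul_zero, add_zero]

theorem jacobiSeq_memℓp {f : ℕ → ℝ} (hf : (Function.support f).Finite) :
    Memℓp (jacobiSeq f) 2 :=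
  (memℓp_zero (jacobiSeq_support_finite hf)).of_exponent_ge (by norm_num)

/-- The Jacobi operator `D` on `ℓ²(ℕ)` as a densely defined (partial) linear operator,
with domain the finitely supported sequences. -/
def jacobiOp : lp (fun _ : ℕ => ℝ) 2 →ₗ.[ℝ] lp (fun _ : ℕ => ℝ) 2 where
  domain := finitelySupported
  toFun :=
    { toFun := fun f => ⟨jacobiSeq (⇑(f : lp (fun _ : ℕ => ℝ) 2)), jacobiSeq_memℓp f.2⟩
      map_add' := fun f g => by
        apply lp.ext
        funext n
        simp only [Submodule.coe_add, lp.coeFn_add, Pi.add_apply, jacobiSeq]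
        ring
      map_smul' := fun c f => by
        apply lp.ext
        funext n
        simp only [Submodule.coe_smul, lp.coeFn_smul, Pi.smul_apply, smul_eq_mul,
          RingHom.id_apply, jacobiSeq]
        ring }

/-!
A densely defined symmetric operator `T` is essentially self-adjoint as soon as its adjoint `T†`
is symmetric as well: `T ≤ T†` gives `closure T ≤ T†`, while an element `(u₁, u₂)` orthogonal to
the graph of `T` satisfies `T† u₂ = -u₁`, so symmetry of `T†` puts its graph in the double
orthogonal complement of the graph of `T`, i.e. in the closure.

For the Jacobi matrix `J`, testing against the basis vectors shows that `T†` is the maximal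
operator `y ↦ J y` on `{y ∈ ℓ² | J y ∈ ℓ²}`. Summation by parts gives
`∑_{n ≤ N} (J g · h - g · J h) = √(N+1) (g(N+1) h(N) - g(N) h(N+1))`. For `g, h, J g, J h ∈ ℓ²`
the left side converges, and a nonzero limit `L` would force
`|L| / 2 ≤ (N+1) |g(N+1) h(N) - g(N) h(N+1)|` for large `N`; the right side is summable while
`∑ 1/(N+1)` diverges. Hence `L = 0` and `T†` is symmetric.
-/

open Filter Topology
open scoped LinearPMap

local notation "ℓ²" => lp (fun _ : ℕ => ℝ) 2

namespace LinearPMap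

variable {𝕜 E : Type*} [RCLike 𝕜] [NormedAddCommGroup E] [InnerProductSpace 𝕜 E]
  [CompleteSpace E] {T S : E →ₗ.[𝕜] E}

theorem adjoint_le_adjoint_of_le (hT : Dense (T.domain : Set E)) (h : T ≤ S) : S† ≤ T† :=
  IsFormalAdjoint.le_adjoint hT fun x y => by
    rw [h.2 (y := ⟨x, h.1 x.2⟩) rfl]
    exact (adjoint_isFormalAdjoint (hT.mono h.1)).symm ⟨x, h.1 x.2⟩ y

theorem IsFormalAdjoint.isClosable (hT : Dense (T.domain : Set E)) (h : T.IsFormalAdjoint T) :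
    T.IsClosable :=
  (adjoint_isClosed hT).isClosable.leIsClosable (h.le_adjoint hT)

theorem IsFormalAdjoint.closure_le_adjoint (hT : Dense (T.domain : Set E))
    (h : T.IsFormalAdjoint T) : T.closure ≤ T† := by
  rw [← le_graph_iff, ← (h.isClosable hT).graph_closure_eq_closure_graph]
  exact Submodule.topologicalClosure_minimal _ (le_graph_of_le (h.le_adjoint hT))
    (adjoint_isClosed hT)

theorem adjoint_le_closure (hT : Dense (T.domain : Set E)) (hcl : T.IsClosable)
    (h : T†.IsFormalAdjoint T†) : T† ≤ T.closure := by
  let e := WithLp.prodContinuousLinearEquiv 2 𝕜 E E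
  let G := T.graph.comap (e : WithLp 2 (E × E) →ₗ[𝕜] E × E)
  rw [← le_graph_iff, ← hcl.graph_closure_eq_closure_graph]
  rintro ⟨x, y⟩ hxy
  obtain ⟨x, rfl, rfl⟩ := (mem_graph_iff _).1 hxy
  have key : e.symm (x, T† x) ∈ Gᗮᗮ := by
    rw [Submodule.mem_orthogonal']
    intro v hv
    have hperp : ∀ f : T.domain, inner 𝕜 (-v.fst) f = inner 𝕜 v.snd (T f) := fun f => by
      have := hv (e.symm (f, T f)) (by simp [G])
      rw [WithLp.prod_inner_apply] at this
      rw [inner_neg_left, ← inner_conj_symm, ← inner_conj_symm v.snd, ← _root_.map_neg]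
      exact congrArg _ (neg_eq_of_add_eq_zero_right this)
    have hdom : v.snd ∈ T†.domain := mem_adjoint_domain_of_exists _ ⟨-v.fst, hperp⟩
    have happ : T† ⟨v.snd, hdom⟩ = -v.fst := adjoint_apply_eq hT _ hperp
    show inner 𝕜 (x : E) v.fst + inner 𝕜 (T† x) v.snd = 0
    rw [show inner 𝕜 (T† x) v.snd = _ from h x ⟨v.snd, hdom⟩, happ, inner_neg_right,
      add_neg_cancel]
  rw [Submodule.orthogonal_orthogonal_eq_closure, ← SetLike.mem_coe,
    Submodule.topologicalClosure_coe] at key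
  rw [← SetLike.mem_coe, Submodule.topologicalClosure_coe]
  have hclosure := (e.toHomeomorph.preimage_closure (T.graph : Set (E × E))).symm ▸ key
  simpa using hclosure

theorem IsFormalAdjoint.adjoint_eq_closure (hT : Dense (T.domain : Set E))
    (h : T.IsFormalAdjoint T) (h' : T†.IsFormalAdjoint T†) : T† = T.closure :=
  le_antisymm (adjoint_le_closure hT (h.isClosable hT) h') (h.closure_le_adjoint hT)

theorem IsFormalAdjoint.isSelfAdjoint_adjoint (hT : Dense (T.domain : Set E))
    (h : T.IsFormalAdjoint T) (h' : T†.IsFormalAdjoint T†) : IsSelfAdjoint T† :=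
  have hle : T ≤ T† := h.le_adjoint hT
  le_antisymm (adjoint_le_adjoint_of_le hT hle) (h'.le_adjoint (hT.mono hle.1))

end LinearPMap

theorem summable_mul_of_summable_sq {ι : Type*} {f g : ι → ℝ} (hf : Summable fun i => f i ^ 2)
    (hg : Summable fun i => g i ^ 2) : Summable fun i => f i * g i :=
  Summable.of_norm_bounded ((hf.add hg).div_const 2) fun i => by
    rw [Real.norm_eq_abs, abs_mul]
    nlinarith [sq_abs (f i), sq_abs (g i), sq_nonneg (|f i| - |g i|)]

theorem eq_zero_of_tendsto_of_abs_le_succ_mul {W a : ℕ → ℝ} {L : ℝ}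
    (hW : Tendsto W atTop (𝓝 L)) (ha : Summable a) (hWa : ∀ N, |W N| ≤ (N + 1) * a N) :
    L = 0 := by
  by_contra hL
  have hL2 : 0 < |L| / 2 := by positivity
  have hlarge : ∀ᶠ N in atTop, |L| / 2 < |W N| :=
    hW.abs.eventually (eventually_gt_nhds (half_lt_self (abs_pos.2 hL)))
  have hharmonic : Summable fun N : ℕ => |L| / 2 * ((N : ℝ) + 1)⁻¹ :=
    ha.of_norm_bounded_eventually_nat <| hlarge.mono fun N hN => by
      rw [Real.norm_eq_abs, abs_of_pos (by positivity), ← div_eq_mul_inv,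
        div_le_iff₀' (by positivity)]
      exact hN.le.trans (hWa N)
  refine Real.not_summable_natCast_inv ((summable_nat_add_iff 1).1 ?_)
  simpa using (summable_mul_left_iff hL2.ne').1 hharmonic

theorem lp.summable_sq {ι : Type*} (f : lp (fun _ : ι => ℝ) 2) : Summable fun i => f i ^ 2 := by
  simpa [Real.rpow_natCast, sq_abs] using (lp.memℓp f).summable (p := 2) (by norm_num)

def jacobiWronskian (g h : ℕ → ℝ) (N : ℕ) : ℝ :=
  √((N : ℝ) + 1) * (g (N + 1) * h N - g N * h (N + 1))

theorem sum_range_jacobiSeq_mul_sub (g h : ℕ → ℝ) (N : ℕ) :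
    ∑ n ∈ Finset.range (N + 1), (jacobiSeq g n * h n - g n * jacobiSeq h n) =
      jacobiWronskian g h N := by
  induction N with
  | zero => simp [jacobiSeq, jacobiWronskian]
  | succ N ih =>
    rw [Finset.sum_range_succ, ih]
    simp only [jacobiSeq, jacobiWronskian, Nat.add_sub_cancel]
    push_cast
    ring

theorem tendsto_jacobiWronskian {g h : ℕ → ℝ} (hgh : Summable fun n => jacobiSeq g n * h n)
    (hhg : Summable fun n => g n * jacobiSeq h n) :
    Tendsto (jacobiWronskian g h) atTop
      (𝓝 (∑' n, jacobiSeq g n * h n - ∑' n, g n * jacobiSeq h n)) := by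
  have := (hgh.hasSum.sub hhg.hasSum).tendsto_sum_nat.comp (tendsto_add_atTop_nat 1)
  simpa only [Function.comp_def, sum_range_jacobiSeq_mul_sub] using this

theorem tsum_jacobiSeq_mul_of_tendsto {g h : ℕ → ℝ} (hgh : Summable fun n => jacobiSeq g n * h n)
    (hhg : Summable fun n => g n * jacobiSeq h n)
    (hW : Tendsto (jacobiWronskian g h) atTop (𝓝 0)) :
    ∑' n, jacobiSeq g n * h n = ∑' n, g n * jacobiSeq h n :=
  sub_eq_zero.1 (tendsto_nhds_unique (tendsto_jacobiWronskian hgh hhg) hW)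

theorem tsum_jacobiSeq_mul_of_finite_support {f : ℕ → ℝ} (hf : (Function.support f).Finite)
    (h : ℕ → ℝ) : ∑' n, jacobiSeq f n * h n = ∑' n, f n * jacobiSeq h n := by
  obtain ⟨M, hM⟩ := hf.bddAbove
  have hvanish : ∀ n, M < n → f n = 0 := fun n hn => by
    by_contra hfn
    exact hn.not_ge (hM hfn)
  refine tsum_jacobiSeq_mul_of_tendsto
    (summable_of_hasFiniteSupport ((jacobiSeq_support_finite hf).subset
      (Function.support_mul_subset_left _ _)))
    (summable_of_hasFiniteSupport (hf.subset (Function.support_mul_subset_left _ _)))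
    (tendsto_const_nhds.congr' (eventually_atTop.2 ⟨M + 1, fun N hN => ?_⟩))
  simp [jacobiWronskian, hvanish N (by omega), hvanish (N + 1) (by omega)]

theorem tsum_jacobiSeq_mul_of_summable_sq {g h : ℕ → ℝ} (hg : Summable fun n => g n ^ 2)
    (hh : Summable fun n => h n ^ 2) (hJg : Summable fun n => jacobiSeq g n ^ 2)
    (hJh : Summable fun n => jacobiSeq h n ^ 2) :
    ∑' n, jacobiSeq g n * h n = ∑' n, g n * jacobiSeq h n := by
  have hgh := summable_mul_of_summable_sq hJg hh
  have hhg := summable_mul_of_summable_sq hg hJh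
  have hcross : Summable fun N => |g (N + 1) * h N - g N * h (N + 1)| :=
    ((summable_mul_of_summable_sq ((summable_nat_add_iff 1).2 hg) hh).sub
      (summable_mul_of_summable_sq hg ((summable_nat_add_iff 1).2 hh))).abs
  have hbound : ∀ N : ℕ, |jacobiWronskian g h N| ≤
      (N + 1) * |g (N + 1) * h N - g N * h (N + 1)| := fun N => by
    rw [jacobiWronskian, abs_mul, abs_of_nonneg (Real.sqrt_nonneg _)]
    gcongr
    exact Real.sqrt_le_self_iff.2 (Or.inr (by simp))
  have hW := tendsto_jacobiWronskian hgh hhg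
  refine tsum_jacobiSeq_mul_of_tendsto hgh hhg ?_
  rwa [eq_zero_of_tendsto_of_abs_le_succ_mul hW hcross hbound] at hW

theorem single_mem_finitelySupported (n : ℕ) (a : ℝ) :
    lp.single 2 n a ∈ finitelySupported :=
  (Set.finite_singleton n).subset Pi.support_single_subset

theorem finitelySupported_dense : Dense (finitelySupported : Set ℓ²) := fun f =>
  mem_closure_of_tendsto (lp.hasSum_single (by norm_num) f) <| .of_forall fun _ =>
    finitelySupported.sum_mem fun i _ => single_mem_finitelySupported i (f i)

theorem tsum_single_mul (n : ℕ) (a : ℝ) (v : ℕ → ℝ) :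
    ∑' m, lp.single (E := fun _ : ℕ => ℝ) 2 n a m * v m = a * v n :=
  (tsum_eq_single n fun _ hm => by simp [hm]).trans (by simp)

theorem real_inner_lp_eq_tsum (f g : ℓ²) :
    inner ℝ f g = ∑' n, f n * g n :=
  (lp.inner_eq_tsum f g).trans (tsum_congr fun _ => mul_comm _ _)

theorem jacobiOp_apply (f : jacobiOp.domain) : ⇑(jacobiOp f) = jacobiSeq f := rfl

theorem jacobiOp_isFormalAdjoint : jacobiOp.IsFormalAdjoint jacobiOp := fun f g => by
  rw [real_inner_lp_eq_tsum, real_inner_lp_eq_tsum, jacobiOp_apply, jacobiOp_apply]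
  exact tsum_jacobiSeq_mul_of_finite_support f.2 _

theorem jacobiOp_adjoint_apply (y : jacobiOp†.domain) : ⇑(jacobiOp† y) = jacobiSeq y := by
  ext n
  have hδ := single_mem_finitelySupported n 1
  calc (jacobiOp† y) n = inner ℝ (jacobiOp† y) (lp.single 2 n 1) := by
        simp [lp.inner_single_right]
    _ = inner ℝ (jacobiOp ⟨_, hδ⟩) (y : ℓ²) :=
        (LinearPMap.adjoint_isFormalAdjoint finitelySupported_dense y ⟨_, hδ⟩).trans
          (real_inner_comm _ _)
    _ = ∑' m, jacobiSeq (lp.single 2 n 1 : ℓ²) m * (y : ℓ²) m := real_inner_lp_eq_tsum _ _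
    _ = ∑' m, (lp.single 2 n 1 : ℓ²) m * jacobiSeq (y : ℓ²) m :=
        tsum_jacobiSeq_mul_of_finite_support hδ _
    _ = jacobiSeq y n := by rw [tsum_single_mul, one_mul]

theorem jacobiOp_adjoint_isFormalAdjoint : jacobiOp†.IsFormalAdjoint jacobiOp† := fun x y => by
  rw [real_inner_lp_eq_tsum, real_inner_lp_eq_tsum, jacobiOp_adjoint_apply,
    jacobiOp_adjoint_apply]
  refine tsum_jacobiSeq_mul_of_summable_sq (lp.summable_sq _) (lp.summable_sq _) ?_ ?_ <;>
    simpa only [jacobiOp_adjoint_apply] using lp.summable_sq (jacobiOp† _)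

/-- The Jacobi operator with zero diagonal and off-diagonal entries `√1, √2, √3, …` on
`ℓ²(ℕ)`, defined on the finitely supported sequences, is essentially self-adjoint:
it is symmetric (it is a formal adjoint of itself), it is closable, its closure is
self-adjoint, and equivalently its adjoint coincides with its closure. -/
theorem jacobiOp_essentiallySelfAdjoint :
    jacobiOp.IsFormalAdjoint jacobiOp ∧ jacobiOp.IsClosable ∧
      IsSelfAdjoint jacobiOp.closure ∧ jacobiOp.adjoint = jacobiOp.closure := by
  have hdense : Dense (jacobiOp.domain : Set ℓ²) := finitelySupported_dense
  have hadj := jacobiOp_isFormalAdjoint.adjoint_eq_closure hdense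
    jacobiOp_adjoint_isFormalAdjoint
  refine ⟨jacobiOp_isFormalAdjoint, jacobiOp_isFormalAdjoint.isClosable hdense, ?_, hadj⟩
  rw [← hadj]
  exact jacobiOp_isFormalAdjoint.isSelfAdjoint_adjoint hdense jacobiOp_adjoint_isFormalAdjoint

end
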